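/- arXiv:1703.05289 — 2 statements merged into one kernel-verified Lean document; each statement's English description precedes it below -/
import Mathlib

section
/- Let F be a real singular 3×3 matrix of rank 2 admitting a decomposition F = K⁻¹ E K⁻¹ with K = diag(f,f,1) for some nonzero f ∈ ℝ and E an essential matrix with ‖t‖ = 1. Then F satisfies both det F = 0 and the quintic polynomial constraint of the f+E+f elimination ideal; conversely, given such F, the matrix K F K (for the same f) satisfies the Demazure equations 2(KFK)(KFK)ᵀ(KFK) = trace((KFK)(KFK)ᵀ)(KFK). -/
/-!
Since `K = diag(f,f,1)` is invertible, `K F K = E = [t]ₓ R`. The Demazure identity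
`2 E Eᵀ E = tr(E Eᵀ) E` passes from `[t]ₓ` to `[t]ₓ R` because `R Rᵀ = 1`, and for `[t]ₓ` it
reads `2 |t|² [t]ₓ = 2 |t|² [t]ₓ`, as `[t]ₓ [t]ₓᵀ [t]ₓ = |t|² [t]ₓ`. Writing the Demazure
identity for `K F K` in the entries of `F`, the combination of its `(0,2)`, `(1,2)`, `(2,0)`,
`(2,1)` entries found by elimination is `f⁶` times the quintic. `det F = 0` because
`det [t]ₓ = 0`.
-/

open Matrix

/-- The skew-symmetric cross-product matrix `[t]ₓ` of `t ∈ ℝ³`. -/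
def crossMat (t : Fin 3 → ℝ) : Matrix (Fin 3) (Fin 3) ℝ :=
  !![0, -t 2, t 1; t 2, 0, -t 0; -t 1, t 0, 0]

def IsDemazure {n α : Type*} [Fintype n] [CommRing α] (E : Matrix n n α) : Prop :=
  (2 : α) • (E * Eᵀ * E) = (E * Eᵀ).trace • E

theorem IsDemazure.mul_of_mul_transpose_eq_one {n α : Type*} [Fintype n] [DecidableEq n]
    [CommRing α] {E R : Matrix n n α} (hE : IsDemazure E) (hR : R * Rᵀ = 1) :
    IsDemazure (E * R) := by
  have hEE : E * R * (E * R)ᵀ = E * Eᵀ := by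
    rw [transpose_mul, Matrix.mul_assoc, ← Matrix.mul_assoc R, hR, Matrix.one_mul]
  rw [IsDemazure, hEE, ← Matrix.mul_assoc, ← smul_mul, hE, smul_mul]

theorem crossMat_mul_transpose_mul_self (t : Fin 3 → ℝ) :
    crossMat t * (crossMat t)ᵀ * crossMat t = (t 0 ^ 2 + t 1 ^ 2 + t 2 ^ 2) • crossMat t := by
  ext i j
  fin_cases i <;> fin_cases j <;>
    simp [crossMat, mul_apply, Fin.sum_univ_three, vecMul, dotProduct] <;> ring

theorem trace_crossMat_mul_transpose (t : Fin 3 → ℝ) :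
    (crossMat t * (crossMat t)ᵀ).trace = 2 * (t 0 ^ 2 + t 1 ^ 2 + t 2 ^ 2) := by
  simp [crossMat, trace_fin_three, Fin.sum_univ_three, vecMul, dotProduct]
  ring

theorem isDemazure_crossMat (t : Fin 3 → ℝ) : IsDemazure (crossMat t) := by
  rw [IsDemazure, crossMat_mul_transpose_mul_self, trace_crossMat_mul_transpose, smul_smul]

theorem det_crossMat (t : Fin 3 → ℝ) : (crossMat t).det = 0 := by
  simp [crossMat, det_fin_three]
  ring

def fEfQuintic (F : Matrix (Fin 3) (Fin 3) ℝ) : ℝ :=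
  F 0 0 * F 0 2 ^ 3 * F 2 0 + F 0 2 ^ 2 * F 1 0 * F 1 2 * F 2 0
      + F 0 0 * F 0 2 * F 1 2 ^ 2 * F 2 0 + F 1 0 * F 1 2 ^ 3 * F 2 0
      - F 0 0 * F 0 2 * F 2 0 ^ 3 - F 1 0 * F 1 2 * F 2 0 ^ 3
      + F 0 1 * F 0 2 ^ 3 * F 2 1 + F 0 2 ^ 2 * F 1 1 * F 1 2 * F 2 1
      + F 0 1 * F 0 2 * F 1 2 ^ 2 * F 2 1 + F 1 1 * F 1 2 ^ 3 * F 2 1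
      - F 0 1 * F 0 2 * F 2 0 ^ 2 * F 2 1 - F 1 1 * F 1 2 * F 2 0 ^ 2 * F 2 1
      - F 0 0 * F 0 2 * F 2 0 * F 2 1 ^ 2 - F 1 0 * F 1 2 * F 2 0 * F 2 1 ^ 2
      - F 0 1 * F 0 2 * F 2 1 ^ 3 - F 1 1 * F 1 2 * F 2 1 ^ 3
      - F 0 0 ^ 2 * F 0 2 ^ 2 * F 2 2
      - 2 * F 0 0 * F 0 2 * F 1 0 * F 1 2 * F 2 2
      - 2 * F 0 1 * F 0 2 * F 1 1 * F 1 2 * F 2 2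
      - F 0 1 ^ 2 * F 0 2 ^ 2 * F 2 2
      - F 1 0 ^ 2 * F 1 2 ^ 2 * F 2 2 - F 1 1 ^ 2 * F 1 2 ^ 2 * F 2 2
      + F 0 0 ^ 2 * F 2 0 ^ 2 * F 2 2 + F 1 0 ^ 2 * F 2 0 ^ 2 * F 2 2
      + 2 * F 0 0 * F 0 1 * F 2 0 * F 2 1 * F 2 2
      + 2 * F 1 0 * F 1 1 * F 2 0 * F 2 1 * F 2 2
      + F 0 1 ^ 2 * F 2 1 ^ 2 * F 2 2 + F 1 1 ^ 2 * F 2 1 ^ 2 * F 2 2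

theorem fEfQuintic_eq_zero_of_isDemazure {f : ℝ} (hf : f ≠ 0) {F : Matrix (Fin 3) (Fin 3) ℝ}
    (hG : IsDemazure (diagonal ![f, f, 1] * F * diagonal ![f, f, 1])) : fEfQuintic F = 0 := by
  set G := diagonal ![f, f, 1] * F * diagonal ![f, f, 1]
  have hGF (i j : Fin 3) : G i j = ![f, f, 1] i * F i j * ![f, f, 1] j := by
    simp [G, diagonal_mul, mul_diagonal]
  have entry (i j : Fin 3) := congrFun (congrFun hG i) j
  have h02 := entry 0 2
  have h12 := entry 1 2
  have h20 := entry 2 0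
  have h21 := entry 2 1
  simp only [Matrix.smul_apply, smul_eq_mul, mul_apply, transpose_apply, Fin.sum_univ_three,
    trace_fin_three, hGF, Matrix.cons_val] at h02 h12 h20 h21
  have key : f ^ 6 * fEfQuintic F = 0 := by
    unfold fEfQuintic
    linear_combination
      ((F 0 0 * F 2 0 + F 0 1 * F 2 1) * f ^ 3 / 2) * h02
      + ((F 1 0 * F 2 0 + F 1 1 * F 2 1) * f ^ 3 / 2) * h12
      - ((F 0 0 * F 0 2 + F 1 0 * F 1 2) * f ^ 3 / 2) * h20
      - ((F 0 1 * F 0 2 + F 1 1 * F 1 2) * f ^ 3 / 2) * h21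
  exact (mul_eq_zero.mp key).resolve_left (pow_ne_zero 6 hf)

theorem fEf_variety_general (F : Matrix (Fin 3) (Fin 3) ℝ)
    (f : ℝ) (hf : f ≠ 0)
    (K : Matrix (Fin 3) (Fin 3) ℝ) (hK : K = !![f, 0, 0; 0, f, 0; 0, 0, 1])
    (t : EuclideanSpace ℝ (Fin 3))
    (R : Matrix (Fin 3) (Fin 3) ℝ) (hR : R * Rᵀ = 1)
    (E : Matrix (Fin 3) (Fin 3) ℝ) (hE : E = crossMat t * R)
    (hF : F = K⁻¹ * E * K⁻¹) :
    F.det = 0 ∧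
    (F 0 0 * F 0 2 ^ 3 * F 2 0 + F 0 2 ^ 2 * F 1 0 * F 1 2 * F 2 0
      + F 0 0 * F 0 2 * F 1 2 ^ 2 * F 2 0 + F 1 0 * F 1 2 ^ 3 * F 2 0
      - F 0 0 * F 0 2 * F 2 0 ^ 3 - F 1 0 * F 1 2 * F 2 0 ^ 3
      + F 0 1 * F 0 2 ^ 3 * F 2 1 + F 0 2 ^ 2 * F 1 1 * F 1 2 * F 2 1
      + F 0 1 * F 0 2 * F 1 2 ^ 2 * F 2 1 + F 1 1 * F 1 2 ^ 3 * F 2 1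
      - F 0 1 * F 0 2 * F 2 0 ^ 2 * F 2 1 - F 1 1 * F 1 2 * F 2 0 ^ 2 * F 2 1
      - F 0 0 * F 0 2 * F 2 0 * F 2 1 ^ 2 - F 1 0 * F 1 2 * F 2 0 * F 2 1 ^ 2
      - F 0 1 * F 0 2 * F 2 1 ^ 3 - F 1 1 * F 1 2 * F 2 1 ^ 3
      - F 0 0 ^ 2 * F 0 2 ^ 2 * F 2 2
      - 2 * F 0 0 * F 0 2 * F 1 0 * F 1 2 * F 2 2
      - 2 * F 0 1 * F 0 2 * F 1 1 * F 1 2 * F 2 2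
      - F 0 1 ^ 2 * F 0 2 ^ 2 * F 2 2
      - F 1 0 ^ 2 * F 1 2 ^ 2 * F 2 2 - F 1 1 ^ 2 * F 1 2 ^ 2 * F 2 2
      + F 0 0 ^ 2 * F 2 0 ^ 2 * F 2 2 + F 1 0 ^ 2 * F 2 0 ^ 2 * F 2 2
      + 2 * F 0 0 * F 0 1 * F 2 0 * F 2 1 * F 2 2
      + 2 * F 1 0 * F 1 1 * F 2 0 * F 2 1 * F 2 2
      + F 0 1 ^ 2 * F 2 1 ^ 2 * F 2 2 + F 1 1 ^ 2 * F 2 1 ^ 2 * F 2 2 = 0) ∧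
    (2 : ℝ) • ((K * F * K) * (K * F * K)ᵀ * (K * F * K))
      = ((K * F * K) * (K * F * K)ᵀ).trace • (K * F * K) := by
  have hK_diag : K = diagonal ![f, f, 1] := by rw [hK, diagonal_vec3]
  have hK_unit : IsUnit K.det := by simp [hK_diag, det_diagonal, Fin.prod_univ_three, hf]
  have hKFK : K * F * K = E := by
    rw [hF, ← Matrix.mul_assoc, nonsing_inv_mul_cancel_right (h := hK_unit),
      mul_nonsing_inv_cancel_left (h := hK_unit)]
  have hE_demazure : IsDemazure E := hE ▸ (isDemazure_crossMat t).mul_of_mul_transpose_eq_one hR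
  refine ⟨?_, ?_, hKFK ▸ hE_demazure⟩
  · simp [hF, hE, det_crossMat]
  · exact fEfQuintic_eq_zero_of_isDemazure hf (hK_diag ▸ hKFK ▸ hE_demazure)

/-- A rank-2 matrix `F = K⁻¹ E K⁻¹`, `K = diag(f,f,1)`, `E` essential with
`‖t‖ = 1`, satisfies `det F = 0` and the quintic of the f+E+f elimination
ideal; moreover `K F K` satisfies the Demazure equations. -/
theorem fEf_variety (F : Matrix (Fin 3) (Fin 3) ℝ) (hrank : F.rank = 2)
    (f : ℝ) (hf : f ≠ 0)
    (K : Matrix (Fin 3) (Fin 3) ℝ) (hK : K = !![f, 0, 0; 0, f, 0; 0, 0, 1])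
    (t : EuclideanSpace ℝ (Fin 3)) (ht : ‖t‖ = 1)
    (R : Matrix (Fin 3) (Fin 3) ℝ) (hR : R * Rᵀ = 1) (hdet : R.det = 1)
    (E : Matrix (Fin 3) (Fin 3) ℝ) (hE : E = crossMat t * R)
    (hF : F = K⁻¹ * E * K⁻¹) :
    F.det = 0 ∧
    (F 0 0 * F 0 2 ^ 3 * F 2 0 + F 0 2 ^ 2 * F 1 0 * F 1 2 * F 2 0
      + F 0 0 * F 0 2 * F 1 2 ^ 2 * F 2 0 + F 1 0 * F 1 2 ^ 3 * F 2 0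
      - F 0 0 * F 0 2 * F 2 0 ^ 3 - F 1 0 * F 1 2 * F 2 0 ^ 3
      + F 0 1 * F 0 2 ^ 3 * F 2 1 + F 0 2 ^ 2 * F 1 1 * F 1 2 * F 2 1
      + F 0 1 * F 0 2 * F 1 2 ^ 2 * F 2 1 + F 1 1 * F 1 2 ^ 3 * F 2 1
      - F 0 1 * F 0 2 * F 2 0 ^ 2 * F 2 1 - F 1 1 * F 1 2 * F 2 0 ^ 2 * F 2 1
      - F 0 0 * F 0 2 * F 2 0 * F 2 1 ^ 2 - F 1 0 * F 1 2 * F 2 0 * F 2 1 ^ 2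
      - F 0 1 * F 0 2 * F 2 1 ^ 3 - F 1 1 * F 1 2 * F 2 1 ^ 3
      - F 0 0 ^ 2 * F 0 2 ^ 2 * F 2 2
      - 2 * F 0 0 * F 0 2 * F 1 0 * F 1 2 * F 2 2
      - 2 * F 0 1 * F 0 2 * F 1 1 * F 1 2 * F 2 2
      - F 0 1 ^ 2 * F 0 2 ^ 2 * F 2 2
      - F 1 0 ^ 2 * F 1 2 ^ 2 * F 2 2 - F 1 1 ^ 2 * F 1 2 ^ 2 * F 2 2
      + F 0 0 ^ 2 * F 2 0 ^ 2 * F 2 2 + F 1 0 ^ 2 * F 2 0 ^ 2 * F 2 2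
      + 2 * F 0 0 * F 0 1 * F 2 0 * F 2 1 * F 2 2
      + 2 * F 1 0 * F 1 1 * F 2 0 * F 2 1 * F 2 2
      + F 0 1 ^ 2 * F 2 1 ^ 2 * F 2 2 + F 1 1 ^ 2 * F 2 1 ^ 2 * F 2 2 = 0) ∧
    (2 : ℝ) • ((K * F * K) * (K * F * K)ᵀ * (K * F * K))
      = ((K * F * K) * (K * F * K)ᵀ).trace • (K * F * K) :=
  fEf_variety_general F f hf K hK t R hR E hE hF
end

section
/- Let A be a real 3×3 matrix satisfying the Demazure equations 2 A Aᵀ A − trace(A Aᵀ) A = 0 and A ≠ 0. Then A is an essential matrix, i.e., there exist t ∈ ℝ³ and R ∈ SO(3) with A = [t]_× R. -/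
/-!
Put `c = tr(A Aᵀ) / 2 > 0`; the Demazure equations say `A Aᵀ A = c A`, so `c⁻¹ A Aᵀ` is an
orthogonal projection, of trace `2`. Hence `A` is singular, and if `t ∈ ker Aᵀ`, `v ∈ ker A` are
scaled to `|t|² = |v|² = c`, then `A Aᵀ = c - t tᵀ`. The matrix `R = c⁻¹ (t vᵀ - [t]ₓ A)` is then
orthogonal with `[t]ₓ R = A`, and replacing `v` by `-v` flips the sign of `det R`.
-/

open Matrix

namespace Matrix

variable {n : Type*} [Fintype n]

theorem IsSymm.eq_zero_of_mul_self_eq_smul_of_trace_eq_zero {X : Matrix n n ℝ} (hX : X.IsSymm)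
    {c : ℝ} (hXX : X * X = c • X) (htr : X.trace = 0) : X = 0 := by
  rw [← trace_mul_conjTranspose_self_eq_zero_iff, conjTranspose_eq_transpose_of_trivial, hX.eq,
    hXX, trace_smul, htr, smul_zero]

theorem IsSymm.eq_smul_one_sub_vecMulVec [DecidableEq n] {X : Matrix n n ℝ} (hX : X.IsSymm)
    {c : ℝ} (hXX : X * X = c • X) (htr : X.trace + c = Fintype.card n * c) {t : n → ℝ}
    (hXt : X *ᵥ t = 0) (htt : t ⬝ᵥ t = c) : X = c • 1 - vecMulVec t t := by
  have hXT : X * vecMulVec t t = 0 := by rw [mul_vecMulVec, hXt, zero_vecMulVec]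
  have hTX : vecMulVec t t * X = 0 := by
    rw [vecMulVec_mul, ← mulVec_transpose, hX.eq, hXt, vecMulVec_zero]
  have hTT : vecMulVec t t * vecMulVec t t = c • vecMulVec t t := by
    rw [vecMulVec_mul_vecMulVec, htt, vecMulVec_smul]
  -- `Y` again satisfies `Y² = c Y`, but has trace `0`.
  set Y := c • 1 - X - vecMulVec t t with hY
  have hYsymm : Y.IsSymm := by
    simp only [IsSymm, hY, transpose_sub, transpose_smul, transpose_one, hX.eq,
      transpose_vecMulVec]
  have hYY : Y * Y = c • Y := by
    simp only [hY, sub_mul, mul_sub, smul_mul_assoc, mul_smul_comm, Matrix.one_mul,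
      Matrix.mul_one, hXX, hXT, hTX, hTT]
    module
  have hYtr : Y.trace = 0 := by
    rw [hY, trace_sub, trace_sub, trace_smul, trace_one, trace_vecMulVec, htt, smul_eq_mul]
    linarith
  have hY0 := hYsymm.eq_zero_of_mul_self_eq_smul_of_trace_eq_zero hYY hYtr
  rw [hY, sub_sub, sub_eq_zero] at hY0
  rw [hY0, add_sub_cancel_right]

theorem det_eq_zero_of_mul_transpose_mul_eq_smul {K : Type*} [Field K] [DecidableEq n]
    {A : Matrix n n K} {c : K} (hA : A * Aᵀ * A = c • A)
    (htr : (A * Aᵀ).trace ≠ Fintype.card n * c) : A.det = 0 := by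
  by_contra hdet
  have hunit : IsUnit A := (isUnit_iff_isUnit_det A).mpr (Ne.isUnit hdet)
  have hAA : A * Aᵀ = c • 1 :=
    hunit.mul_left_injective (by simpa only [smul_mul_assoc, Matrix.one_mul] using hA)
  rw [hAA, trace_smul, trace_one, smul_eq_mul, mul_comm] at htr
  exact htr rfl

theorem exists_mulVec_eq_zero_and_dotProduct_self_eq [DecidableEq n] {M : Matrix n n ℝ}
    (hM : M.det = 0) {c : ℝ} (hc : 0 ≤ c) : ∃ v, M *ᵥ v = 0 ∧ v ⬝ᵥ v = c := by
  obtain ⟨x, hx0, hx⟩ := exists_mulVec_eq_zero_iff.mpr hM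
  have hpos : 0 < x ⬝ᵥ x := by simpa using dotProduct_self_star_pos_iff.mpr hx0
  refine ⟨√(c / (x ⬝ᵥ x)) • x, by rw [mulVec_smul, hx, smul_zero], ?_⟩
  rw [smul_dotProduct, dotProduct_smul, smul_eq_mul, smul_eq_mul, ← mul_assoc,
    Real.mul_self_sqrt (by positivity), div_mul_cancel₀ _ hpos.ne']

theorem det_add_vecMulVec_add_det_sub_vecMulVec {R : Type*} [CommRing R]
    (B : Matrix (Fin 3) (Fin 3) R) (u w : Fin 3 → R) :
    (B + vecMulVec u w).det + (B - vecMulVec u w).det = 2 * B.det := by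
  simp only [det_fin_three, Matrix.add_apply, Matrix.sub_apply, vecMulVec_apply]
  ring

end Matrix

theorem crossMat_transpose (t : Fin 3 → ℝ) : (crossMat t)ᵀ = -crossMat t := by
  ext i j
  fin_cases i <;> fin_cases j <;> simp [crossMat]

theorem crossMat_mulVec_self (t : Fin 3 → ℝ) : crossMat t *ᵥ t = 0 := by
  ext i
  fin_cases i <;> simp [crossMat, mulVec, dotProduct, Fin.sum_univ_three] <;> ring

theorem crossMat_mul_self (t : Fin 3 → ℝ) :
    crossMat t * crossMat t = vecMulVec t t - (t ⬝ᵥ t) • 1 := by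
  ext i j
  fin_cases i <;> fin_cases j <;>
    simp [crossMat, mul_apply, dotProduct, vecMulVec_apply, Fin.sum_univ_three] <;> ring

/-- If `A = [t]ₓ R` with `R` orthogonal and `w = Rᵀ t`, then `[t]ₓ A = [t]ₓ² R = (t tᵀ - |t|²) R`
recovers `R` as `|t|⁻² (t wᵀ - [t]ₓ A)`. -/
noncomputable def essentialRotation (A : Matrix (Fin 3) (Fin 3) ℝ) (t w : Fin 3 → ℝ) :
    Matrix (Fin 3) (Fin 3) ℝ :=
  (t ⬝ᵥ t)⁻¹ • (vecMulVec t w - crossMat t * A)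

section essentialRotation

variable {A : Matrix (Fin 3) (Fin 3) ℝ} {t : Fin 3 → ℝ}

theorem essentialRotation_mul_transpose {w : Fin 3 → ℝ} (ht : t ⬝ᵥ t ≠ 0)
    (hAA : A * Aᵀ = (t ⬝ᵥ t) • 1 - vecMulVec t t) (hAw : A *ᵥ w = 0) (hw : w ⬝ᵥ w = t ⬝ᵥ t) :
    essentialRotation A t w * (essentialRotation A t w)ᵀ = 1 := by
  have hKT : ∀ x : Fin 3 → ℝ, crossMat t * vecMulVec t x = 0 := fun x => by
    rw [mul_vecMulVec, crossMat_mulVec_self, zero_vecMulVec]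
  have hAW : A * vecMulVec w t = 0 := by rw [mul_vecMulVec, hAw, zero_vecMulVec]
  have hWA : vecMulVec t w * Aᵀ = 0 := by
    rw [← transpose_vecMulVec, ← transpose_mul, hAW, transpose_zero]
  have hKAAK : crossMat t * A * (Aᵀ * crossMat t) =
      (t ⬝ᵥ t) • vecMulVec t t - ((t ⬝ᵥ t) * (t ⬝ᵥ t)) • (1 : Matrix (Fin 3) (Fin 3) ℝ) := by
    rw [Matrix.mul_assoc, ← Matrix.mul_assoc A, hAA, sub_mul, mul_sub, smul_mul_assoc,
      Matrix.one_mul, mul_smul_comm, crossMat_mul_self, ← Matrix.mul_assoc, hKT, Matrix.zero_mul,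
      sub_zero, smul_sub, smul_smul]
  have hRt : (essentialRotation A t w)ᵀ = (t ⬝ᵥ t)⁻¹ • (vecMulVec w t + Aᵀ * crossMat t) := by
    rw [essentialRotation, transpose_smul, transpose_sub, transpose_vecMulVec, transpose_mul,
      crossMat_transpose, Matrix.mul_neg, sub_neg_eq_add]
  rw [hRt, essentialRotation, smul_mul_smul_comm, sub_mul, mul_add, mul_add,
    vecMulVec_mul_vecMulVec, hw, vecMulVec_smul, ← Matrix.mul_assoc, hWA, Matrix.zero_mul,
    Matrix.mul_assoc, hAW, Matrix.mul_zero, hKAAK, zero_add, add_zero, sub_sub_cancel, smul_smul,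
    ← mul_mul_mul_comm, inv_mul_cancel₀ ht, one_mul, one_smul]

theorem crossMat_mul_essentialRotation (w : Fin 3 → ℝ) (ht : t ⬝ᵥ t ≠ 0) (hAt : Aᵀ *ᵥ t = 0) :
    crossMat t * essentialRotation A t w = A := by
  rw [essentialRotation, mul_smul_comm, mul_sub, mul_vecMulVec, crossMat_mulVec_self,
    zero_vecMulVec, zero_sub, ← Matrix.mul_assoc, crossMat_mul_self, sub_mul, vecMulVec_mul,
    ← mulVec_transpose, hAt, vecMulVec_zero, smul_mul_assoc, Matrix.one_mul, zero_sub, neg_neg,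
    smul_smul, inv_mul_cancel₀ ht, one_smul]

theorem det_essentialRotation_neg (w : Fin 3 → ℝ) :
    (essentialRotation A t (-w)).det = -(essentialRotation A t w).det := by
  have hsum := det_add_vecMulVec_add_det_sub_vecMulVec (-(crossMat t * A)) t w
  rw [det_neg, det_mul, det_crossMat, zero_mul, mul_zero, mul_zero] at hsum
  rw [essentialRotation, essentialRotation, det_smul, det_smul, vecMulVec_neg,
    show -vecMulVec t w - crossMat t * A = -(crossMat t * A) - vecMulVec t w by abel,
    show vecMulVec t w - crossMat t * A = -(crossMat t * A) + vecMulVec t w by abel]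
  linear_combination (t ⬝ᵥ t)⁻¹ ^ Fintype.card (Fin 3) * hsum

end essentialRotation

/-- A nonzero real 3×3 matrix satisfying the Demazure equations is an
essential matrix: `A = [t]ₓ R` for some `t ∈ ℝ³` and `R ∈ SO(3)`. -/
theorem demazure_implies_essential (A : Matrix (Fin 3) (Fin 3) ℝ)
    (hDem : (2 : ℝ) • (A * Aᵀ * A) - (A * Aᵀ).trace • A = 0) (hA : A ≠ 0) :
    ∃ (t : Fin 3 → ℝ) (R : Matrix (Fin 3) (Fin 3) ℝ),
      R * Rᵀ = 1 ∧ R.det = 1 ∧ A = crossMat t * R := by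
  set c := (A * Aᵀ).trace / 2 with hc
  have hc_pos : 0 < c := by
    have h := (posSemidef_self_mul_conjTranspose A).trace_nonneg.lt_of_ne
      (Ne.symm (mt trace_mul_conjTranspose_self_eq_zero_iff.mp hA))
    rw [conjTranspose_eq_transpose_of_trivial] at h
    positivity
  have hAAA : A * Aᵀ * A = c • A := by
    rw [hc, div_eq_inv_mul, ← smul_smul, ← sub_eq_zero.mp hDem, smul_smul,
      inv_mul_cancel₀ two_ne_zero, one_smul]
  have hdet : A.det = 0 :=
    det_eq_zero_of_mul_transpose_mul_eq_smul hAAA (by rw [Fintype.card_fin]; push_cast; linarith)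
  obtain ⟨t, hAt, htt⟩ :=
    exists_mulVec_eq_zero_and_dotProduct_self_eq (by rwa [det_transpose]) hc_pos.le (M := Aᵀ)
  obtain ⟨v, hAv, hvv⟩ := exists_mulVec_eq_zero_and_dotProduct_self_eq hdet hc_pos.le
  have hAA : A * Aᵀ = c • 1 - vecMulVec t t :=
    (isSymm_mul_transpose_self A).eq_smul_one_sub_vecMulVec
      (by rw [← Matrix.mul_assoc, hAAA, smul_mul_assoc])
      (by rw [Fintype.card_fin]; push_cast; linarith) (by rw [← mulVec_mulVec, hAt, mulVec_zero])
      htt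
  have ht : t ⬝ᵥ t ≠ 0 := htt ▸ hc_pos.ne'
  rw [← htt] at hAA hvv
  have hRR : ∀ w, A *ᵥ w = 0 → w ⬝ᵥ w = t ⬝ᵥ t →
      essentialRotation A t w * (essentialRotation A t w)ᵀ = 1 :=
    fun w hAw hw => essentialRotation_mul_transpose ht hAA hAw hw
  have hdet_sq : (essentialRotation A t v).det * (essentialRotation A t v).det = 1 := by
    simpa only [det_mul, det_transpose, det_one] using congrArg det (hRR v hAv hvv)
  rcases mul_self_eq_one_iff.mp hdet_sq with h | h
  · exact ⟨t, _, hRR v hAv hvv, h, (crossMat_mul_essentialRotation v ht hAt).symm⟩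
  · refine ⟨t, _, hRR (-v) (by rw [mulVec_neg, hAv, neg_zero]) (by rwa [neg_dotProduct_neg]),
      by rw [det_essentialRotation_neg, h, neg_neg],
      (crossMat_mul_essentialRotation (-v) ht hAt).symm⟩
end
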